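/- For every valid configuration c = (z, σ, t), the optimal tree t*(c) = t ∪ reach(c) attains the best possible F1 among all trees reachable from c; that is, F1(t*(c)) = F1(c) = max over t' ∈ D(c) of F1(t'). (Theorem 1, optimality of t*.) -/

import Mathlib

/-!
Formalization of the span-based Structure/Label transition parsing system of
Cross & Huang (2016), "Span-Based Constituency Parsing with a Structure-Label
System and Provably Optimal Dynamic Oracles".

A configuration is `(z, σ, t)` where `z` is the step number, `σ` the stack of
span boundaries and `t` the set of brackets built so far.  A bracket is a
triple `(X, i, j)` with `X` a nonterminal label and `i < j ≤ n` a span.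
-/

namespace SpanParser

structure Config (N : Type*) where
  z : ℕ
  σ : List ℕ
  t : Finset (N × ℕ × ℕ)

variable {N : Type*}

/-- The span of a bracket. -/
def span (b : N × ℕ × ℕ) : ℕ × ℕ := b.2

/-- Top (rightmost) boundary of the stack. -/
def topJ (σ : List ℕ) : ℕ := σ.getLastD 0

/-- Second-to-top boundary of the stack. -/
def topI (σ : List ℕ) : ℕ := σ.dropLast.getLastD 0

/-- Parser actions: shift, combine, label-`X`, and nolabel. -/
inductive Action (N : Type*) where
  | sh : Action N
  | comb : Action N
  | label : N → Action N
  | nolabel : Action N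

variable [DecidableEq N]

/-- Applicability of an action at a configuration (for sentence length `n`). -/
def App (n : ℕ) (c : Config N) : Action N → Prop
  | .sh      => Even c.z ∧ c.σ ≠ [] ∧ topJ c.σ < n
  | .comb    => Even c.z ∧ 3 ≤ c.σ.length
  | .label _ => Odd c.z ∧ 2 ≤ c.σ.length
  | .nolabel => Odd c.z ∧ 2 ≤ c.σ.length ∧ c.z < 4 * n - 1

/-- The result `τ(c)` of applying action `τ` to configuration `c`. -/
def doAct (c : Config N) : Action N → Config N
  | .sh      => ⟨c.z + 1, c.σ ++ [topJ c.σ + 1], c.t⟩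
  | .comb    => ⟨c.z + 1, c.σ.dropLast.dropLast ++ [topJ c.σ], c.t⟩
  | .label X => ⟨c.z + 1, c.σ, insert (X, topI c.σ, topJ c.σ) c.t⟩
  | .nolabel => ⟨c.z + 1, c.σ, c.t⟩

/-- The initial configuration `(0, [0], ∅)`. -/
def initial (N : Type*) : Config N := ⟨0, [0], ∅⟩

/-- One transition step `c ⊢ c'`. -/
def Step (n : ℕ) (c c' : Config N) : Prop := ∃ a, App n c a ∧ c' = doAct c a

/-- `⊢*`: reflexive-transitive closure of the transition relation. -/
def Reaches (n : ℕ) : Config N → Config N → Prop := Relation.ReflTransGen (Step n)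

/-- A configuration is valid if it is reachable from the initial configuration. -/
def Valid (n : ℕ) (c : Config N) : Prop := Reaches n (initial N) c

/-- A final configuration: `σ = [0, n]` and `z = 4n - 2`. -/
def Final (n : ℕ) (c : Config N) : Prop := c.σ = [0, n] ∧ c.z = 4 * n - 2

/-- `D(c)`: the set of trees of final configurations reachable from `c`. -/
def Dset (n : ℕ) (c : Config N) : Set (Finset (N × ℕ × ℕ)) :=
  {t' | ∃ c', Reaches n c c' ∧ Final n c' ∧ c'.t = t'}

/-- `(i,j) ⪯ (p,q)`: span `(i,j)` is encompassed by `(p,q)`, i.e. `p ≤ i < j ≤ q`. -/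
def Enc (s₁ s₂ : ℕ × ℕ) : Prop := s₂.1 ≤ s₁.1 ∧ s₁.1 < s₁.2 ∧ s₁.2 ≤ s₂.2

/-- `(i,j) ≺ (p,q)`: strict encompassment. -/
def SEnc (s₁ s₂ : ℕ × ℕ) : Prop := Enc s₁ s₂ ∧ s₁ ≠ s₂

/-- `tG` is a gold tree for sentence length `n`: valid spans, pairwise-distinct
spans, pairwise non-crossing spans, and exactly one bracket with span `(0, n)`
(uniqueness follows from distinctness of spans). -/
structure IsGold (n : ℕ) (tG : Finset (N × ℕ × ℕ)) : Prop where
  validSpans : ∀ b ∈ tG, (span b).1 < (span b).2 ∧ (span b).2 ≤ n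
  distinctSpans : ∀ b₁ ∈ tG, ∀ b₂ ∈ tG, span b₁ = span b₂ → b₁ = b₂
  noncrossing : ∀ b₁ ∈ tG, ∀ b₂ ∈ tG,
    Enc (span b₁) (span b₂) ∨ Enc (span b₂) (span b₁) ∨
    (span b₁).2 ≤ (span b₂).1 ∨ (span b₂).2 ≤ (span b₁).1
  root : ∃ X, (X, 0, n) ∈ tG

open Classical in
/-- `left(c)`: gold brackets (strictly, at even steps) encompassing the top
span whose left boundary occurs on the stack. -/
noncomputable def leftSet (tG : Finset (N × ℕ × ℕ)) (c : Config N) :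
    Finset (N × ℕ × ℕ) :=
  tG.filter fun b =>
    (if Even c.z then SEnc (topI c.σ, topJ c.σ) (span b)
     else Enc (topI c.σ, topJ c.σ) (span b)) ∧ (span b).1 ∈ c.σ

open Classical in
/-- `right(c)`: gold brackets entirely on the queue. -/
noncomputable def rightSet (tG : Finset (N × ℕ × ℕ)) (c : Config N) :
    Finset (N × ℕ × ℕ) :=
  tG.filter fun b => topJ c.σ ≤ (span b).1

open Classical in
/-- `reach(c)`: the reachable gold brackets (all of `t_G` at the initial
configuration, whose stack has fewer than two boundaries). -/
noncomputable def reach (tG : Finset (N × ℕ × ℕ)) (c : Config N) :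
    Finset (N × ℕ × ℕ) :=
  if c.σ.length < 2 then tG else leftSet tG c ∪ rightSet tG c

/-- The optimal tree `t*(c) = t ∪ reach(c)`. -/
noncomputable def tstar (tG : Finset (N × ℕ × ℕ)) (c : Config N) :
    Finset (N × ℕ × ℕ) :=
  c.t ∪ reach tG c

/-- `b = next(c)`: the `≺`-minimal element of `left(c)`. -/
def IsNext (tG : Finset (N × ℕ × ℕ)) (c : Config N) (b : N × ℕ × ℕ) : Prop :=
  b ∈ leftSet tG c ∧ ∀ b' ∈ leftSet tG c, Enc (span b) (span b')

/-- The dynamic-oracle policy `dyna(c)` as a predicate on actions. -/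
def Dyna (tG : Finset (N × ℕ × ℕ)) (c : Config N) (a : Action N) : Prop :=
  if c.σ.length < 2 then a = Action.sh
  else if Even c.z then
    ∃ b, IsNext tG c b ∧
      (((span b).1 = topI c.σ ∧ topJ c.σ < (span b).2 ∧ a = Action.sh) ∨
       ((span b).1 < topI c.σ ∧ (span b).2 = topJ c.σ ∧ a = Action.comb) ∨
       ((span b).1 < topI c.σ ∧ topJ c.σ < (span b).2 ∧
          (a = Action.sh ∨ a = Action.comb)))
  else
    (∃ X, (X, topI c.σ, topJ c.σ) ∈ tG ∧ a = Action.label X) ∨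
    ((∀ X, (X, topI c.σ, topJ c.σ) ∉ tG) ∧ a = Action.nolabel)

/-- `F1` of a predicted bracket set `t'` against the gold tree `tG`
(`0` when `t' ∩ tG = ∅`). -/
noncomputable def f1 (tG t' : Finset (N × ℕ × ℕ)) : ℝ :=
  if t' ∩ tG = ∅ then 0
  else
    (2 * (((t' ∩ tG).card : ℝ) / (tG.card : ℝ)) * (((t' ∩ tG).card : ℝ) / (t'.card : ℝ))) /
      ((((t' ∩ tG).card : ℝ) / (tG.card : ℝ)) + (((t' ∩ tG).card : ℝ) / (t'.card : ℝ)))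

/-- `F1(c)`: the best `F1` among trees reachable from `c`. -/
noncomputable def configF1 (n : ℕ) (tG : Finset (N × ℕ × ℕ)) (c : Config N) : ℝ :=
  sSup (f1 tG '' Dset n c)

/-- A run of (applicable) actions from one configuration to another. -/
inductive Run (n : ℕ) : Config N → List (Action N) → Config N → Prop
  | refl (c : Config N) : Run n c [] c
  | step {c c' : Config N} {as : List (Action N)} (a : Action N)
      (happ : App n c a) (h : Run n (doAct c a) as c') : Run n c (a :: as) c'

/-- A run all of whose actions follow the dynamic oracle. -/
inductive DynaRun (n : ℕ) (tG : Finset (N × ℕ × ℕ)) : Config N → Config N → Prop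
  | refl (c : Config N) : DynaRun n tG c c
  | step {c c' : Config N} (a : Action N) (happ : App n c a) (hdyna : Dyna tG c a)
      (h : DynaRun n tG (doAct c a) c') : DynaRun n tG c c'

def isSh : Action N → Bool
  | .sh => true
  | _ => false

def isComb : Action N → Bool
  | .comb => true
  | _ => false

/-- Label-step actions: `label-X` or `nolabel`. -/
def isLabelStep : Action N → Bool
  | .label _ => true
  | .nolabel => true
  | _ => false

end SpanParser

/-!
The set `(t ∪ reach c) ∩ t_G` can only shrink along a transition: `reach` never grows, and a
label adds a gold bracket only when its span was reachable. Since `t` itself only grows, every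
`t' ∈ D(c)` has no correct bracket outside `t*(c)` and keeps every wrong bracket of `t*(c)`
(these are the wrong brackets of `t`), while `F1` is monotone in the correct brackets and
antitone in the wrong ones. Conversely, the dynamic oracle (label gold spans; combine when a
reachable bracket ends at the top boundary or the sentence is used up; shift otherwise) loses no
reachable bracket, so it keeps `t*` fixed until a final configuration, where `reach` is empty.
Hence `t*(c) ∈ D(c)`.
-/

namespace SpanParser

variable {N : Type*}

theorem exists_eq_append_pair {σ : List ℕ} (h : 2 ≤ σ.length) : ∃ s a b, σ = s ++ [a, b] := by
  obtain ⟨s, b, rfl⟩ := (List.eq_nil_or_concat σ).resolve_left (by rintro rfl; simp at h)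
  obtain ⟨s, a, rfl⟩ := (List.eq_nil_or_concat s).resolve_left (by rintro rfl; simp at h)
  exact ⟨s, a, b, by simp⟩

@[simp] theorem topI_append_pair (s : List ℕ) (a b : ℕ) : topI (s ++ [a, b]) = a := by
  simp [topI]

@[simp] theorem topJ_append_pair (s : List ℕ) (a b : ℕ) : topJ (s ++ [a, b]) = b := by
  simp [topJ]

/-- `step_count` holds because each `sh` or `comb` is followed by a label step, `topJ` counts
the shifts, and the stack length is `1 + #sh - #comb`. -/
structure WellFormed (n : ℕ) (c : Config N) : Prop where
  head_eq : c.σ.head? = some 0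
  sorted : c.σ.Pairwise (· < ·)
  le : ∀ x ∈ c.σ, x ≤ n
  step_count : c.z + c.z % 2 + 2 * c.σ.length = 4 * topJ c.σ + 2

theorem wellFormed_initial (n : ℕ) : WellFormed n (initial N) where
  head_eq := rfl
  sorted := by simp [initial]
  le := by simp [initial]
  step_count := rfl

namespace WellFormed

variable {n : ℕ} {c : Config N}

theorem eq_singleton (hc : WellFormed n c) (h : c.σ.length < 2) : c.σ = [0] := by
  match c.σ, h, hc.head_eq with
  | [a], _, h0 => simpa using h0
  | [], _, h0 => simp at h0

theorem exists_eq_append_pair (hc : WellFormed n c) (h : 2 ≤ c.σ.length) :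
    ∃ s i j, c.σ = s ++ [i, j] ∧ (∀ x ∈ s, x < i) ∧ i < j ∧ j ≤ n := by
  obtain ⟨s, i, j, hσ⟩ := SpanParser.exists_eq_append_pair h
  have hsorted := hc.sorted
  rw [hσ, List.pairwise_append] at hsorted
  exact ⟨s, i, j, hσ, fun x hx => hsorted.2.2 x hx i (by simp), by simpa using hsorted.2.1,
    hc.le j (by simp [hσ])⟩

theorem exists_eq_append_triple (hc : WellFormed n c) (h3 : 3 ≤ c.σ.length) :
    ∃ s h i j, c.σ = s ++ [h, i, j] ∧ (∀ x ∈ s, x < h) ∧ h < i ∧ i < j := by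
  obtain ⟨s₀, i, j, hσ, hs₀, hij, -⟩ := hc.exists_eq_append_pair (by omega)
  obtain ⟨s, h, rfl⟩ := (List.eq_nil_or_concat s₀).resolve_left (by rintro rfl; simp [hσ] at h3)
  have hsorted := hc.sorted
  simp only [hσ, List.concat_eq_append, List.append_assoc, List.pairwise_append] at hsorted
  exact ⟨s, h, i, j, by simp [hσ], fun x hx => hsorted.2.2 x hx h (by simp), hs₀ h (by simp),
    hij⟩

theorem le_topJ (hc : WellFormed n c) {x : ℕ} (hx : x ∈ c.σ) : x ≤ topJ c.σ := by
  by_cases h : 2 ≤ c.σ.length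
  · obtain ⟨s, i, j, hσ, hs, hij, -⟩ := hc.exists_eq_append_pair h
    simp only [hσ, List.mem_append, List.mem_cons, List.not_mem_nil, or_false,
      topJ_append_pair] at hx ⊢
    rcases hx with hx | rfl | rfl
    exacts [(hs x hx).le.trans hij.le, hij.le, le_rfl]
  · simp_all [hc.eq_singleton (by omega)]

theorem topJ_le (hc : WellFormed n c) : topJ c.σ ≤ n := by
  by_cases h : c.σ.length < 2
  · simp [hc.eq_singleton h, topJ]
  · obtain ⟨s, i, j, hσ, -, -, hjn⟩ := hc.exists_eq_append_pair (by omega)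
    simpa [hσ] using hjn

theorem two_le_length_of_odd (hc : WellFormed n c) (hodd : ¬Even c.z) : 2 ≤ c.σ.length := by
  by_contra h
  have hcount := hc.step_count
  rw [hc.eq_singleton (by omega)] at hcount
  rw [Nat.even_iff] at hodd
  simp only [topJ, List.getLastD_cons, List.getLastD_nil, List.length_singleton] at hcount
  omega

theorem z_lt (hn : 1 ≤ n) (hc : WellFormed n c) : c.z < 4 * n := by
  have hcount := hc.step_count
  have hj := hc.topJ_le
  by_cases h : c.σ.length < 2
  · simp only [hc.eq_singleton h, topJ, List.getLastD_cons, List.getLastD_nil,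
      List.length_singleton] at hcount
    omega
  · omega

end WellFormed

variable [DecidableEq N]

@[simp] theorem doAct_z (c : Config N) (a : Action N) : (doAct c a).z = c.z + 1 := by
  cases a <;> rfl

theorem doAct_sh_σ_eq {c : Config N} {s : List ℕ} {i j : ℕ} (hσ : c.σ = s ++ [i, j]) :
    (doAct c .sh).σ = (s ++ [i]) ++ [j, j + 1] := by
  simp [doAct, hσ]

theorem doAct_comb_σ_eq {c : Config N} {s : List ℕ} {h i j : ℕ} (hσ : c.σ = s ++ [h, i, j]) :
    (doAct c .comb).σ = s ++ [h, j] := by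
  simp only [doAct, hσ, show s ++ [h, i, j] = (s ++ [h]) ++ [i, j] by simp, topJ_append_pair]
  simp

namespace WellFormed

variable {n : ℕ} {c : Config N}

theorem doAct_sh (hc : WellFormed n c) (ha : App n c .sh) : WellFormed n (doAct c .sh) := by
  obtain ⟨hev, hne, hj⟩ := ha
  have hcount := hc.step_count
  rw [Nat.even_iff] at hev
  refine ⟨?_, ?_, ?_, ?_⟩ <;> simp only [doAct]
  · rw [List.head?_append_of_ne_nil _ hne]
    exact hc.head_eq
  · exact List.pairwise_append.2 ⟨hc.sorted, by simp,
      by simpa using fun x hx => Nat.lt_succ_of_le (hc.le_topJ hx)⟩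
  · simpa [or_imp, forall_and] using ⟨hc.le, hj⟩
  · simp only [topJ, List.getLastD_concat, List.length_append, List.length_singleton] at hcount ⊢
    omega

theorem doAct_comb (hc : WellFormed n c) (ha : App n c .comb) : WellFormed n (doAct c .comb) := by
  obtain ⟨s, h, i, j, hσ, -, -, -⟩ := hc.exists_eq_append_triple ha.2
  have hσ' := doAct_comb_σ_eq hσ
  have hsub : (doAct c .comb).σ.Sublist c.σ := by
    rw [hσ', hσ]
    exact (List.Sublist.cons _ (List.Sublist.refl _)).cons_cons _ |>.append_left s
  have hcount := hc.step_count
  have hhead := hc.head_eq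
  have hev := Nat.even_iff.1 ha.1
  have hj : topJ c.σ = j := by simp [hσ, topJ]
  rw [hj, hσ] at hcount
  rw [hσ] at hhead
  refine ⟨?_, hc.sorted.sublist hsub, fun x hx => hc.le x (hsub.subset hx), ?_⟩ <;> rw [hσ']
  · cases s <;> simpa using hhead
  · simp only [doAct_z, topJ_append_pair, List.length_append, List.length_cons,
      List.length_nil] at hcount ⊢
    omega

theorem doAct_of_odd (hc : WellFormed n c) {a : Action N} (hodd : ¬Even c.z)
    (hσ : (doAct c a).σ = c.σ) : WellFormed n (doAct c a) := by
  have hcount := hc.step_count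
  rw [Nat.even_iff] at hodd
  refine ⟨?_, ?_, ?_, ?_⟩ <;> rw [hσ]
  exacts [hc.head_eq, hc.sorted, hc.le, by rw [doAct_z]; omega]

theorem doAct (hc : WellFormed n c) {a : Action N} (ha : App n c a) :
    WellFormed n (doAct c a) := by
  cases a with
  | sh => exact hc.doAct_sh ha
  | comb => exact hc.doAct_comb ha
  | label X => exact hc.doAct_of_odd (Nat.not_even_iff_odd.2 ha.1) rfl
  | nolabel => exact hc.doAct_of_odd (Nat.not_even_iff_odd.2 ha.1) rfl

theorem of_reaches (hc : WellFormed n c) {c' : Config N} (h : Reaches n c c') :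
    WellFormed n c' := by
  induction h with
  | refl => exact hc
  | tail _ hstep ih =>
    obtain ⟨a, ha, rfl⟩ := hstep
    exact ih.doAct ha

theorem of_valid (hc : Valid n c) : WellFormed n c := (wellFormed_initial n).of_reaches hc

end WellFormed

section Reach

variable {n : ℕ} {tG : Finset (N × ℕ × ℕ)} {c c' : Config N} {X : N} {p q : ℕ}

theorem reach_subset_gold : reach tG c ⊆ tG := by
  rw [reach]
  split
  · exact subset_rfl
  · intro b hb
    simp only [leftSet, rightSet, Finset.mem_union, Finset.mem_filter] at hb
    tauto

theorem reach_of_length_lt_two (h : c.σ.length < 2) : reach tG c = tG := if_pos h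

theorem mem_reach_iff {s : List ℕ} {i j : ℕ} (hσ : c.σ = s ++ [i, j]) :
    (X, p, q) ∈ reach tG c ↔ (X, p, q) ∈ tG ∧
      ((p ∈ s ∨ p = i) ∧ p ≤ i ∧ i < j ∧ j ≤ q ∧ (Even c.z → p < i ∨ j < q) ∨ j ≤ p) := by
  rw [reach, if_neg (by simp [hσ])]
  simp only [Finset.mem_union, leftSet, rightSet, Finset.mem_filter, ← and_or_left]
  simp only [hσ, span, SEnc, Enc, topI_append_pair, topJ_append_pair, List.mem_append,
    List.mem_cons, List.not_mem_nil, or_false, ne_eq, Prod.mk.injEq]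
  refine and_congr_right fun _ => ?_
  by_cases hps : p ∈ s <;> split_ifs with hev <;>
    simp only [hps, hev, true_implies, false_implies, true_or, false_or, true_and, and_true] <;>
    constructor <;> intro <;> omega

theorem reach_doAct_sh_subset (hc : WellFormed n c) (hev : Even c.z) :
    reach tG (doAct c .sh) ⊆ reach tG c := by
  by_cases hlen : c.σ.length < 2
  · rw [reach_of_length_lt_two hlen]
    exact reach_subset_gold
  obtain ⟨s, i, j, hσ, hs, hij, -⟩ := hc.exists_eq_append_pair (by omega)
  rintro ⟨X, p, q⟩ hb
  rw [mem_reach_iff (doAct_sh_σ_eq hσ)] at hb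
  rw [mem_reach_iff hσ]
  refine ⟨hb.1, ?_⟩
  have := hs p
  simp only [List.mem_append, List.mem_singleton] at hb
  by_cases hps : p ∈ s <;> simp only [hps, hev, true_implies] at hb ⊢ <;> grind

theorem mem_reach_doAct_sh (hc : WellFormed n c) (hev : Even c.z)
    (hb : (X, p, q) ∈ reach tG c) (hq : topJ c.σ < q) : (X, p, q) ∈ reach tG (doAct c .sh) := by
  by_cases hlen : c.σ.length < 2
  · have hσ := hc.eq_singleton hlen
    have hσ' : (doAct c .sh).σ = [] ++ [0, 1] := by simp [doAct, hσ, topJ]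
    rw [reach_of_length_lt_two hlen] at hb
    rw [mem_reach_iff hσ']
    rw [show topJ c.σ = 0 by simp [hσ, topJ]] at hq
    simp only [doAct_z, Nat.even_add_one, hev, not_true, false_implies, and_true]
    grind
  obtain ⟨s, i, j, hσ, hs, hij, -⟩ := hc.exists_eq_append_pair (by omega)
  rw [mem_reach_iff hσ] at hb
  rw [mem_reach_iff (doAct_sh_σ_eq hσ)]
  simp only [hσ, topJ_append_pair] at hq
  refine ⟨hb.1, ?_⟩
  have := hs p
  simp only [List.mem_append, List.mem_singleton]
  by_cases hps : p ∈ s <;>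
    simp only [hps, hev, doAct_z, Nat.even_add_one, true_implies, not_true,
      false_implies] at hb ⊢ <;>
    grind

theorem reach_doAct_comb_subset (hc : WellFormed n c) (ha : App n c .comb) :
    reach tG (doAct c .comb) ⊆ reach tG c := by
  obtain ⟨s, h, i, j, hσ, hs, hhi, hij⟩ := hc.exists_eq_append_triple ha.2
  have hσ₂ : c.σ = (s ++ [h]) ++ [i, j] := by simpa using hσ
  rintro ⟨X, p, q⟩ hb
  rw [mem_reach_iff (doAct_comb_σ_eq hσ)] at hb
  rw [mem_reach_iff hσ₂]
  refine ⟨hb.1, ?_⟩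
  have := hs p
  simp only [List.mem_append, List.mem_singleton]
  by_cases hps : p ∈ s <;>
    simp only [hps, ha.1, doAct_z, Nat.even_add_one, true_implies, not_true,
      false_implies] at hb ⊢ <;>
    grind

theorem mem_reach_doAct_comb (hc : WellFormed n c) (ha : App n c .comb)
    (hb : (X, p, q) ∈ reach tG c) (hp : p < topI c.σ ∨ topJ c.σ ≤ p) :
    (X, p, q) ∈ reach tG (doAct c .comb) := by
  obtain ⟨s, h, i, j, hσ, hs, hhi, hij⟩ := hc.exists_eq_append_triple ha.2
  have hσ₂ : c.σ = (s ++ [h]) ++ [i, j] := by simpa using hσ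
  rw [mem_reach_iff hσ₂] at hb
  rw [mem_reach_iff (doAct_comb_σ_eq hσ)]
  simp only [hσ₂, topI_append_pair, topJ_append_pair] at hp
  refine ⟨hb.1, ?_⟩
  have := hs p
  simp only [List.mem_append, List.mem_singleton] at hb
  by_cases hps : p ∈ s <;>
    simp only [hps, ha.1, doAct_z, Nat.even_add_one, true_implies, not_true,
      false_implies] at hb ⊢ <;>
    grind

theorem reach_subset_of_odd (hc : WellFormed n c) (hodd : ¬Even c.z) (hσ : c'.σ = c.σ) :
    reach tG c' ⊆ reach tG c := by
  obtain ⟨s, i, j, hσ₀, -, -, -⟩ := hc.exists_eq_append_pair (hc.two_le_length_of_odd hodd)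
  rintro ⟨X, p, q⟩ hb
  rw [mem_reach_iff (hσ.trans hσ₀)] at hb
  rw [mem_reach_iff hσ₀]
  simp only [hodd, false_implies, and_true]
  tauto

theorem mem_reach_of_odd (hc : WellFormed n c) (hodd : ¬Even c.z) (hσ : c'.σ = c.σ)
    (hz : c'.z = c.z + 1) (hb : (X, p, q) ∈ reach tG c)
    (hne : (p, q) ≠ (topI c.σ, topJ c.σ)) : (X, p, q) ∈ reach tG c' := by
  obtain ⟨s, i, j, hσ₀, -, -, -⟩ := hc.exists_eq_append_pair (hc.two_le_length_of_odd hodd)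
  rw [mem_reach_iff hσ₀] at hb
  rw [mem_reach_iff (hσ.trans hσ₀)]
  simp only [hσ₀, topI_append_pair, topJ_append_pair, ne_eq, Prod.mk.injEq] at hne
  simp only [hz, Nat.even_add_one, hodd, not_false_eq_true, true_implies]
  grind

theorem mem_reach_top_of_odd (hc : WellFormed n c) (hodd : ¬Even c.z)
    (hb : (X, topI c.σ, topJ c.σ) ∈ tG) : (X, topI c.σ, topJ c.σ) ∈ reach tG c := by
  obtain ⟨s, i, j, hσ₀, -, hij, -⟩ := hc.exists_eq_append_pair (hc.two_le_length_of_odd hodd)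
  simp only [hσ₀, topI_append_pair, topJ_append_pair] at hb ⊢
  rw [mem_reach_iff hσ₀]
  simp [hb, hodd, hij]

theorem reach_doAct_subset (hc : WellFormed n c) {a : Action N} (ha : App n c a) :
    reach tG (doAct c a) ⊆ reach tG c := by
  cases a with
  | sh => exact reach_doAct_sh_subset hc ha.1
  | comb => exact reach_doAct_comb_subset hc ha
  | label X => exact reach_subset_of_odd hc (Nat.not_even_iff_odd.2 ha.1) rfl
  | nolabel => exact reach_subset_of_odd hc (Nat.not_even_iff_odd.2 ha.1) rfl

theorem reach_eq_empty_of_final (hG : IsGold n tG) (hfin : Final n c) : reach tG c = ∅ := by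
  have hσ : c.σ = [] ++ [0, n] := hfin.1
  have hev : Even c.z := Nat.even_iff.2 (by rw [hfin.2]; omega)
  refine Finset.eq_empty_of_forall_notMem fun ⟨X, p, q⟩ hb => ?_
  have hspan := hG.validSpans _ (reach_subset_gold hb)
  rw [mem_reach_iff hσ] at hb
  simp only [span, hev, true_implies] at hb hspan
  omega

end Reach

section Tstar

variable {n : ℕ} {tG : Finset (N × ℕ × ℕ)} {c c' : Config N}

theorem t_subset_doAct_t (c : Config N) (a : Action N) : c.t ⊆ (doAct c a).t := by
  cases a <;> simp [doAct, Finset.subset_insert]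

theorem t_subset_of_reaches (h : Reaches n c c') : c.t ⊆ c'.t := by
  induction h with
  | refl => exact subset_rfl
  | tail _ hstep ih =>
    obtain ⟨a, -, rfl⟩ := hstep
    exact ih.trans (t_subset_doAct_t _ a)

theorem doAct_t_inter_subset_tstar (hc : WellFormed n c) {a : Action N} (ha : App n c a) :
    (doAct c a).t ∩ tG ⊆ tstar tG c := by
  intro b hb
  obtain ⟨hbt, hbG⟩ := Finset.mem_inter.1 hb
  cases a with
  | label X =>
    rcases Finset.mem_insert.1 hbt with rfl | hbt
    · exact Finset.mem_union_right _ (mem_reach_top_of_odd hc (Nat.not_even_iff_odd.2 ha.1) hbG)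
    · exact Finset.mem_union_left _ hbt
  | _ => exact Finset.mem_union_left _ hbt

theorem tstar_doAct_inter_subset (hc : WellFormed n c) {a : Action N} (ha : App n c a) :
    tstar tG (doAct c a) ∩ tG ⊆ tstar tG c ∩ tG := by
  intro b hb
  obtain ⟨hb, hbG⟩ := Finset.mem_inter.1 hb
  refine Finset.mem_inter.2 ⟨?_, hbG⟩
  rcases Finset.mem_union.1 hb with hb | hb
  · exact doAct_t_inter_subset_tstar hc ha (Finset.mem_inter.2 ⟨hb, hbG⟩)
  · exact Finset.mem_union_right _ (reach_doAct_subset hc ha hb)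

theorem tstar_inter_subset_of_reaches (hc : WellFormed n c) (h : Reaches n c c') :
    tstar tG c' ∩ tG ⊆ tstar tG c ∩ tG := by
  induction h with
  | refl => exact subset_rfl
  | @tail d _ hcd hstep ih =>
    obtain ⟨a, ha, rfl⟩ := hstep
    exact (tstar_doAct_inter_subset (hc.of_reaches hcd) ha).trans ih

theorem tstar_sdiff_gold : tstar tG c \ tG = c.t \ tG := by
  rw [tstar, Finset.union_sdiff_distrib, Finset.sdiff_eq_empty_iff_subset.2 reach_subset_gold,
    Finset.union_empty]

theorem tstar_of_final (hG : IsGold n tG) (hfin : Final n c) : tstar tG c = c.t := by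
  rw [tstar, reach_eq_empty_of_final hG hfin, Finset.union_empty]

theorem tstar_doAct_eq (hc : WellFormed n c) {a : Action N} (ha : App n c a)
    (ht : (doAct c a).t ⊆ tstar tG c) (hreach : reach tG c ⊆ tstar tG (doAct c a)) :
    tstar tG (doAct c a) = tstar tG c :=
  (Finset.union_subset ht ((reach_doAct_subset hc ha).trans Finset.subset_union_right)).antisymm
    (Finset.union_subset ((t_subset_doAct_t c a).trans Finset.subset_union_left) hreach)

end Tstar

section Oracle

variable {n : ℕ} {tG : Finset (N × ℕ × ℕ)} {c : Config N}

theorem exists_doAct_tstar_eq_of_odd (hG : IsGold n tG) (hc : WellFormed n c)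
    (hodd : ¬Even c.z) : ∃ a, App n c a ∧ tstar tG (doAct c a) = tstar tG c := by
  have hlen := hc.two_le_length_of_odd hodd
  have hz : Odd c.z := Nat.not_even_iff_odd.1 hodd
  by_cases hgold : ∃ X, (X, topI c.σ, topJ c.σ) ∈ tG
  · obtain ⟨X, hX⟩ := hgold
    refine ⟨.label X, ⟨hz, hlen⟩, tstar_doAct_eq hc ⟨hz, hlen⟩ ?_ ?_⟩
    · exact Finset.insert_subset (Finset.mem_union_right _ (mem_reach_top_of_odd hc hodd hX))
        Finset.subset_union_left
    · rintro ⟨Y, p, q⟩ hb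
      by_cases htop : (p, q) = (topI c.σ, topJ c.σ)
      · rw [hG.distinctSpans _ (reach_subset_gold hb) _ hX htop]
        exact Finset.mem_union_left _ (Finset.mem_insert_self _ _)
      · exact Finset.mem_union_right _ (mem_reach_of_odd hc hodd rfl rfl hb htop)
  · have hcount := hc.step_count
    have happ : App n c .nolabel := ⟨hz, hlen, by
      rw [Nat.even_iff] at hodd; have := hc.topJ_le; omega⟩
    refine ⟨.nolabel, happ, tstar_doAct_eq hc happ Finset.subset_union_left ?_⟩
    rintro ⟨Y, p, q⟩ hb
    refine Finset.mem_union_right _ (mem_reach_of_odd hc hodd rfl rfl hb fun htop => ?_)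
    exact hgold ⟨Y, by simpa [← htop] using reach_subset_gold hb⟩

/-- A reachable gold bracket starting at `topI` would extend past `topJ`, so it would cross the
reachable bracket ending at `topJ` (or leave the sentence). -/
theorem lt_or_le_of_mem_reach (hG : IsGold n tG) (hev : Even c.z)
    {s : List ℕ} {i j : ℕ} (hσ : c.σ = s ++ [i, j])
    (hstuck : j = n ∨ ∃ b ∈ reach tG c, (span b).2 ≤ j) {X : N} {p q : ℕ}
    (hb : (X, p, q) ∈ reach tG c) : p < i ∨ j ≤ p := by
  have hpq := hG.validSpans _ (reach_subset_gold hb)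
  rw [mem_reach_iff hσ] at hb
  simp only [span, hev, true_implies] at hb hpq
  by_contra hcon
  obtain ⟨hbG, ⟨-, hpi, hij, hjq, hlt⟩ | hjp⟩ := hb
  · rcases hstuck with rfl | ⟨⟨Y, p₀, q₀⟩, hb₀, hq₀⟩
    · omega
    · have hpq₀ := hG.validSpans _ (reach_subset_gold hb₀)
      rw [mem_reach_iff hσ] at hb₀
      simp only [span, hev, true_implies] at hb₀ hpq₀ hq₀
      have hcross := hG.noncrossing _ hbG _ hb₀.1
      simp only [span, Enc] at hcross
      omega
  · omega

theorem three_le_length_of_stuck (hG : IsGold n tG) (hc : WellFormed n c) (hev : Even c.z)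
    (hfin : ¬Final n c) {s : List ℕ} {i j : ℕ} (hσ : c.σ = s ++ [i, j])
    (hstuck : j = n ∨ ∃ b ∈ reach tG c, (span b).2 ≤ j) : 3 ≤ c.σ.length := by
  by_contra h3
  obtain rfl : s = [] := List.eq_nil_of_length_eq_zero (by
    have := congrArg List.length hσ
    simp only [List.length_append, List.length_cons, List.length_nil] at this
    omega)
  obtain rfl : i = 0 := by simpa [hσ] using hc.head_eq
  rcases hstuck with rfl | ⟨⟨Y, p₀, q₀⟩, hb₀, hq₀⟩
  · have hcount := hc.step_count
    simp only [hσ, topJ_append_pair, List.length_append, List.length_cons, List.length_nil,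
      Nat.even_iff.1 hev] at hcount
    exact hfin ⟨hσ, by omega⟩
  · have hpq₀ := hG.validSpans _ (reach_subset_gold hb₀)
    have := lt_or_le_of_mem_reach hG hev hσ (.inr ⟨_, hb₀, hq₀⟩) hb₀
    simp only [span] at hpq₀ hq₀
    omega

theorem exists_doAct_tstar_eq_of_even (hn : 1 ≤ n) (hG : IsGold n tG) (hc : WellFormed n c)
    (hev : Even c.z) (hfin : ¬Final n c) :
    ∃ a, App n c a ∧ tstar tG (doAct c a) = tstar tG c := by
  have hne : c.σ ≠ [] := fun h => by simpa [h] using hc.head_eq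
  by_cases hsh : topJ c.σ < n ∧ ∀ b ∈ reach tG c, topJ c.σ < (span b).2
  · have happ : App n c .sh := ⟨hev, hne, hsh.1⟩
    refine ⟨.sh, happ, tstar_doAct_eq hc happ Finset.subset_union_left ?_⟩
    rintro ⟨X, p, q⟩ hb
    exact Finset.mem_union_right _ (mem_reach_doAct_sh hc hev hb (hsh.2 _ hb))
  have hlen : 2 ≤ c.σ.length := by
    by_contra hlen
    have hj : topJ c.σ = 0 := by simp [hc.eq_singleton (by omega), topJ]
    refine hsh ⟨by omega, fun b hb => ?_⟩
    rw [hj]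
    exact (Nat.zero_le _).trans_lt (hG.validSpans b (reach_subset_gold hb)).1
  obtain ⟨s, i, j, hσ, -, -, hjn⟩ := hc.exists_eq_append_pair hlen
  have hstuck : j = n ∨ ∃ b ∈ reach tG c, (span b).2 ≤ j := by
    simp only [hσ, topJ_append_pair, not_and_or, not_forall, not_lt, exists_prop] at hsh
    exact hsh.imp (by omega) id
  have h3 := three_le_length_of_stuck hG hc hev hfin hσ hstuck
  have happ : App n c .comb := ⟨hev, h3⟩
  refine ⟨.comb, happ, tstar_doAct_eq hc happ Finset.subset_union_left ?_⟩
  rintro ⟨X, p, q⟩ hb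
  have hp : p < topI c.σ ∨ topJ c.σ ≤ p := by
    simpa [hσ] using lt_or_le_of_mem_reach hG hev hσ hstuck hb
  exact Finset.mem_union_right _ (mem_reach_doAct_comb hc happ hb hp)

end Oracle

theorem exists_reaches_final_t_eq_tstar {n : ℕ} {tG : Finset (N × ℕ × ℕ)} {c : Config N}
    (hn : 1 ≤ n) (hG : IsGold n tG) (hc : WellFormed n c) :
    ∃ c', Reaches n c c' ∧ Final n c' ∧ c'.t = tstar tG c := by
  by_cases hfin : Final n c
  · exact ⟨c, .refl, hfin, (tstar_of_final hG hfin).symm⟩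
  obtain ⟨a, ha, heq⟩ : ∃ a, App n c a ∧ tstar tG (doAct c a) = tstar tG c := by
    by_cases hev : Even c.z
    exacts [exists_doAct_tstar_eq_of_even hn hG hc hev hfin,
      exists_doAct_tstar_eq_of_odd hG hc hev]
  have := hc.z_lt hn
  obtain ⟨c', hr, hfin', ht⟩ := exists_reaches_final_t_eq_tstar hn hG (hc.doAct ha)
  exact ⟨c', .head ⟨a, ha, rfl⟩ hr, hfin', ht.trans heq⟩
termination_by 4 * n - c.z
decreasing_by simp only [doAct_z]; omega

section F1

open scoped Finset

theorem f1_nonneg (tG t : Finset (N × ℕ × ℕ)) : 0 ≤ f1 tG t := by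
  unfold f1
  split_ifs <;> positivity

theorem f1_eq {tG t : Finset (N × ℕ × ℕ)} (h : t ∩ tG ≠ ∅) :
    f1 tG t = 2 * #(t ∩ tG) / (#tG + #(t \ tG) + #(t ∩ tG)) := by
  have hk : (0 : ℝ) < #(t ∩ tG) := by
    exact_mod_cast Finset.card_pos.2 (Finset.nonempty_iff_ne_empty.2 h)
  have hG : (#(t ∩ tG) : ℝ) ≤ #tG := by
    exact_mod_cast Finset.card_le_card Finset.inter_subset_right
  have ht : (#t : ℝ) = #(t \ tG) + #(t ∩ tG) := by
    exact_mod_cast (Finset.card_sdiff_add_card_inter t tG).symm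
  have : (0 : ℝ) < #tG := hk.trans_le hG
  rw [f1, if_neg h, ht]
  field_simp
  ring

theorem f1_le_f1 {tG t₁ t₂ : Finset (N × ℕ × ℕ)} (hgold : t₁ ∩ tG ⊆ t₂ ∩ tG)
    (hwrong : t₂ \ tG ⊆ t₁ \ tG) : f1 tG t₁ ≤ f1 tG t₂ := by
  by_cases h₁ : t₁ ∩ tG = ∅
  · rw [f1, if_pos h₁]
    exact f1_nonneg _ _
  have h₂ : t₂ ∩ tG ≠ ∅ := fun h => h₁ (Finset.subset_empty.1 (h ▸ hgold))
  rw [f1_eq h₁, f1_eq h₂]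
  have hk₁ : (0 : ℝ) < #(t₁ ∩ tG) := by
    exact_mod_cast Finset.card_pos.2 (Finset.nonempty_iff_ne_empty.2 h₁)
  have hk : (#(t₁ ∩ tG) : ℝ) ≤ #(t₂ ∩ tG) := by exact_mod_cast Finset.card_le_card hgold
  have hw : (#(t₂ \ tG) : ℝ) ≤ #(t₁ \ tG) := by exact_mod_cast Finset.card_le_card hwrong
  rw [div_le_div_iff₀ (add_pos_of_nonneg_of_pos (by positivity) hk₁)
    (add_pos_of_nonneg_of_pos (by positivity) (hk₁.trans_le hk))]
  nlinarith [Nat.cast_nonneg (α := ℝ) #tG, Nat.cast_nonneg (α := ℝ) #(t₂ \ tG)]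

end F1

/-- Theorem 1 (optimality of `t*`): for every valid configuration `c`,
`F1(t*(c))` attains the maximum of `F1` over all trees reachable from `c`,
i.e. `F1(t*(c)) = F1(c) = max_{t' ∈ D(c)} F1(t')`. -/
theorem tstar_optimal (n : ℕ) (hn : 1 ≤ n) (tG : Finset (N × ℕ × ℕ))
    (hG : IsGold n tG) (c : Config N) (hc : Valid n c) :
    IsGreatest (f1 tG '' Dset n c) (f1 tG (tstar tG c)) ∧
      f1 tG (tstar tG c) = configF1 n tG c := by
  have hwf := WellFormed.of_valid hc
  obtain ⟨c', hr, hfin, ht⟩ := exists_reaches_final_t_eq_tstar hn hG hwf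
  have hgreatest : IsGreatest (f1 tG '' Dset n c) (f1 tG (tstar tG c)) := by
    refine ⟨⟨_, ⟨c', hr, hfin, ht⟩, rfl⟩, ?_⟩
    rintro _ ⟨_, ⟨d, hd, hdfin, rfl⟩, rfl⟩
    apply f1_le_f1
    · rw [← tstar_of_final hG hdfin]
      exact tstar_inter_subset_of_reaches hwf hd
    · rw [tstar_sdiff_gold]
      exact Finset.sdiff_subset_sdiff (t_subset_of_reaches hd) subset_rfl
  exact ⟨hgreatest, hgreatest.csSup_eq.symm⟩

end SpanParser
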